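/- Let G be a group and let N be the union of all R-invisible subgroups of G (which is a normal subgroup since R-invisible subgroups are closed under products). Then the quotient group G/N has no nontrivial R-invisible subgroup. -/

import Mathlib

open scoped TensorProduct

/-- The set of denominators of (reduced fractional expressions of) elements of `R ⊆ ℚ`. -/
def DR (R : Subring ℚ) : Set ℕ := {d | ∃ q ∈ R, q.den = d}

variable {G H A : Type*} [Group G] [Group H] [Group A]

/-- Evaluation of a monomial over `G` in `n` indeterminates at a tuple of elements of `G`. -/
noncomputable def evalWord {n : ℕ} (g : Fin n → G) :
    Monoid.Coprod G (FreeGroup (Fin n)) →* G :=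
  Monoid.Coprod.lift (MonoidHom.id G) (FreeGroup.lift g)

/-- The projection `G * F → F → F/[F,F]`. -/
noncomputable def toFreeAb (G : Type*) [Group G] (n : ℕ) :
    Monoid.Coprod G (FreeGroup (Fin n)) →* Abelianization (FreeGroup (Fin n)) :=
  Monoid.Coprod.lift 1 Abelianization.of

/-- An `R`-nullhomologous system of equations `xᵢ^e = wᵢ(x₁,…,xₙ)` over `G`. -/
structure NullSys (R : Subring ℚ) (G : Type*) [Group G] where
  n : ℕ
  e : ℕ
  he : e ∈ DR R
  w : Fin n → Monoid.Coprod G (FreeGroup (Fin n))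
  nullh : ∀ i, toFreeAb G n (w i) = 1

/-- A solution of a system of equations over `G`. -/
def NullSys.IsSolution {R : Subring ℚ} (S : NullSys R G) (g : Fin S.n → G) : Prop :=
  ∀ i, (g i) ^ S.e = evalWord g (S.w i)

/-- A group is `R`-closed if every `R`-nullhomologous system over it has a unique solution. -/
def IsRClosed (R : Subring ℚ) (A : Type*) [Group A] : Prop :=
  ∀ S : NullSys R A, ∃! g : Fin S.n → A, S.IsSolution g

/-- A normal subgroup `N ≤ G` is `R`-invisible if it is normally finitely generated and every
element of `N/[G,N]` has (finite) order lying in `D_R`. -/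
def IsRInvisible (R : Subring ℚ) {G : Type*} [Group G] (N : Subgroup G) : Prop :=
  N.Normal ∧
  (∃ s : Finset G, ↑s ⊆ (N : Set G) ∧ Subgroup.normalClosure ↑s = N) ∧
  ∀ x ∈ N, ∃ e ∈ DR R, x ^ e ∈ ⁅(⊤ : Subgroup G), N⁆

/-!
Lift finitely many normal generators of an `R`-invisible `K ≤ G/N` to a finite `t ⊆ G` and let
`M = ⟨⟨t⟩⟩`. For `g ∈ t`, some power `g^e` with `e ∈ D_R` lies in `⁅G, M⁆` up to an error term
in `N`; the finitely many error terms lie in a single invisible `⟨⟨s₀⟩⟩`, because invisible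
subgroups are directed. Invisibility of a normally finitely generated subgroup `L` only needs to
be checked on normal generators: `L/⁅G, L⁆` is central, so its elements of order in the
multiplicatively closed set `D_R` form a subgroup. Hence `⟨⟨t ∪ s₀⟩⟩` is invisible, so `M ≤ N`
and `K = 1`.
-/

open Subgroup

namespace DR

lemma one_mem (R : Subring ℚ) : 1 ∈ DR R := ⟨0, R.zero_mem, Rat.den_zero⟩

lemma inv_natCast_mem {R : Subring ℚ} {d : ℕ} (hd : d ∈ DR R) : (d : ℚ)⁻¹ ∈ R := by
  obtain ⟨q, hq, rfl⟩ := hd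
  obtain ⟨a, b, hab⟩ := q.isCoprime_num_den
  -- Bézout: `a * num + b * den = 1` gives `den⁻¹ = a * q + b`.
  have hinv : (q.den : ℚ)⁻¹ = a * q + b := by
    refine (eq_inv_of_mul_eq_one_left ?_).symm
    rw [add_mul, mul_assoc, Rat.mul_den_eq_num]
    exact_mod_cast hab
  rw [hinv]
  exact add_mem (mul_mem (intCast_mem R a) hq) (intCast_mem R b)

lemma mul_mem {R : Subring ℚ} {a b : ℕ} (ha : a ∈ DR R) (hb : b ∈ DR R) : a * b ∈ DR R := by
  have hpos : 0 < a * b := by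
    obtain ⟨q, -, rfl⟩ := ha
    obtain ⟨r, -, rfl⟩ := hb
    positivity
  refine ⟨((a * b : ℕ) : ℚ)⁻¹, ?_, Rat.inv_natCast_den_of_pos hpos⟩
  rw [Nat.cast_mul, mul_inv]
  exact R.mul_mem (inv_natCast_mem ha) (inv_natCast_mem hb)

end DR

section Invisible

variable {R : Subring ℚ}

def torsionModCommutator (R : Subring ℚ) (L : Subgroup G) [L.Normal] : Subgroup G where
  carrier := {x | x ∈ L ∧ ∃ e ∈ DR R, x ^ e ∈ ⁅(⊤ : Subgroup G), L⁆}
  one_mem' := ⟨L.one_mem, 1, DR.one_mem R, by simp⟩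
  inv_mem' := by
    rintro x ⟨hxL, e, he, hxe⟩
    exact ⟨inv_mem hxL, e, he, by simpa [inv_pow] using inv_mem hxe⟩
  mul_mem' := by
    rintro x y ⟨hxL, e, he, hxe⟩ ⟨hyL, f, hf, hyf⟩
    refine ⟨mul_mem hxL hyL, e * f, DR.mul_mem he hf, ?_⟩
    let π := QuotientGroup.mk' ⁅(⊤ : Subgroup G), L⁆
    have hx : π x ^ e = 1 := by rw [← map_pow]; exact (QuotientGroup.eq_one_iff _).2 hxe
    have hy : π y ^ f = 1 := by rw [← map_pow]; exact (QuotientGroup.eq_one_iff _).2 hyf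
    -- `L/⁅G, L⁆` is central in `G/⁅G, L⁆`.
    have hxy : Commute (π x) (π y) := by
      rw [← commutatorElement_eq_one_iff_commute, ← map_commutatorElement]
      exact (QuotientGroup.eq_one_iff _).2 (commutator_mem_commutator (mem_top x) hyL)
    refine (QuotientGroup.eq_one_iff _).1 (show π _ = 1 from ?_)
    rw [map_pow, map_mul, hxy.mul_pow, pow_mul, hx, one_pow, one_mul, pow_mul', hy, one_pow]

instance torsionModCommutator.normal (L : Subgroup G) [L.Normal] :
    (torsionModCommutator R L).Normal where
  conj_mem := by
    rintro x ⟨hxL, e, he, hxe⟩ g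
    refine ⟨Normal.conj_mem ‹_› x hxL g, e, he, ?_⟩
    rw [conj_pow]
    exact (commutator_normal ⊤ L).conj_mem _ hxe g

lemma IsRInvisible.of_normalClosure (s : Finset G)
    (hs : ∀ x ∈ s, ∃ e ∈ DR R, x ^ e ∈ ⁅(⊤ : Subgroup G), normalClosure (s : Set G)⁆) :
    IsRInvisible R (normalClosure (s : Set G)) := by
  refine ⟨normalClosure_normal, ⟨s, subset_normalClosure, rfl⟩, fun x hx => ?_⟩
  have hle : normalClosure (s : Set G) ≤ torsionModCommutator R (normalClosure (s : Set G)) :=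
    normalClosure_le_normal fun x hx => ⟨subset_normalClosure hx, hs x hx⟩
  exact (hle hx).2

lemma exists_pow_mem_of_mem_sup {T A K : Subgroup G} [T.Normal] (hA : A ≤ T)
    (hK : ∀ k ∈ K, ∃ e ∈ DR R, k ^ e ∈ T) {x : G} (hx : x ∈ A ⊔ K) :
    ∃ e ∈ DR R, x ^ e ∈ T := by
  let π := QuotientGroup.mk' T
  have hAπ : A.map π = ⊥ := by rwa [Subgroup.map_eq_bot_iff, QuotientGroup.ker_mk']
  have hxK : π x ∈ K.map π := by
    simpa only [Subgroup.map_sup, hAπ, bot_sup_eq] using mem_map_of_mem π hx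
  obtain ⟨k, hk, hkx⟩ := hxK
  obtain ⟨e, he, hke⟩ := hK k hk
  refine ⟨e, he, (QuotientGroup.eq_one_iff _).1 (show π _ = 1 from ?_)⟩
  rw [map_pow, ← hkx, ← map_pow]
  exact (QuotientGroup.eq_one_iff _).2 hke

lemma IsRInvisible.normalClosure_union [DecidableEq G] {t s : Finset G}
    (hs : IsRInvisible R (normalClosure (s : Set G)))
    (ht : ∀ g ∈ t, ∃ e ∈ DR R,
      g ^ e ∈ ⁅(⊤ : Subgroup G), normalClosure (t : Set G)⁆ ⊔ normalClosure (s : Set G)) :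
    IsRInvisible R (normalClosure ((t ∪ s : Finset G) : Set G)) := by
  set L := normalClosure ((t ∪ s : Finset G) : Set G)
  have htL : normalClosure (t : Set G) ≤ L := normalClosure_mono (by simp)
  have hsL : normalClosure (s : Set G) ≤ L := normalClosure_mono (by simp)
  have hsT : ∀ k ∈ normalClosure (s : Set G), ∃ e ∈ DR R, k ^ e ∈ ⁅(⊤ : Subgroup G), L⁆ :=
    fun k hk => (hs.2.2 k hk).imp fun e ⟨he, hke⟩ => ⟨he, commutator_mono le_rfl hsL hke⟩
  refine IsRInvisible.of_normalClosure _ fun x hx => ?_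
  rcases Finset.mem_union.1 hx with hx | hx
  · obtain ⟨e, he, hxe⟩ := ht x hx
    obtain ⟨f, hf, hxef⟩ :=
      exists_pow_mem_of_mem_sup (commutator_mono le_rfl htL) hsT hxe
    exact ⟨e * f, DR.mul_mem he hf, by rwa [pow_mul]⟩
  · exact hsT x (subset_normalClosure hx)

lemma IsRInvisible.bot (R : Subring ℚ) : IsRInvisible R (⊥ : Subgroup G) := by
  simpa using IsRInvisible.of_normalClosure (R := R) (∅ : Finset G) (by simp)

lemma IsRInvisible.sup {K₁ K₂ : Subgroup G} (h₁ : IsRInvisible R K₁) (h₂ : IsRInvisible R K₂) :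
    IsRInvisible R (K₁ ⊔ K₂) := by
  classical
  obtain ⟨-, ⟨s₁, -, rfl⟩, ht₁⟩ := h₁
  obtain ⟨-, ⟨s₂, -, rfl⟩, -⟩ := id h₂
  rw [← Subgroup.normalClosure_union, ← Finset.coe_union]
  refine h₂.normalClosure_union fun g hg => ?_
  obtain ⟨e, he, hge⟩ := ht₁ g (subset_normalClosure hg)
  exact ⟨e, he, mem_sup_left hge⟩

lemma exists_isRInvisible_mem_of_mem_iSup {x : G}
    (hx : x ∈ ⨆ (K : Subgroup G) (_ : IsRInvisible R K), K) :
    ∃ K : Subgroup G, IsRInvisible R K ∧ x ∈ K := by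
  rw [iSup_subtype'] at hx
  have : Nonempty {K : Subgroup G // IsRInvisible R K} := ⟨⟨⊥, IsRInvisible.bot R⟩⟩
  have hdir : Directed (· ≤ ·) fun K : {K : Subgroup G // IsRInvisible R K} => K.1 :=
    fun K₁ K₂ => ⟨⟨K₁.1 ⊔ K₂.1, K₁.2.sup K₂.2⟩, le_sup_left, le_sup_right⟩
  obtain ⟨K, hK⟩ := (mem_iSup_of_directed hdir).1 hx
  exact ⟨K.1, K.2, hK⟩

lemma exists_isRInvisible_forall_of_monotone {ι : Type*} (t : Finset ι)
    {P : ι → Subgroup G → Prop} (hP : ∀ i, Monotone (P i))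
    (h : ∀ i ∈ t, ∃ K : Subgroup G, IsRInvisible R K ∧ P i K) :
    ∃ K : Subgroup G, IsRInvisible R K ∧ ∀ i ∈ t, P i K := by
  classical
  induction t using Finset.induction with
  | empty => exact ⟨⊥, IsRInvisible.bot R, by simp⟩
  | insert i t _ ih =>
    obtain ⟨K₁, hK₁, hP₁⟩ := h i (Finset.mem_insert_self i t)
    obtain ⟨K₂, hK₂, hP₂⟩ := ih fun j hj => h j (Finset.mem_insert_of_mem hj)
    refine ⟨K₁ ⊔ K₂, hK₁.sup hK₂, Finset.forall_mem_insert _ _ _ |>.2 ⟨?_, fun j hj => ?_⟩⟩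
    · exact hP i le_sup_left hP₁
    · exact hP j le_sup_right (hP₂ j hj)

lemma exists_finset_map_normalClosure_eq (N : Subgroup G) [N.Normal] (s : Finset (G ⧸ N)) :
    ∃ t : Finset G, (normalClosure (t : Set G)).map (QuotientGroup.mk' N) =
      normalClosure (s : Set (G ⧸ N)) := by
  classical
  refine ⟨s.image Quotient.out, ?_⟩
  rw [map_normalClosure _ _ (QuotientGroup.mk'_surjective N), Finset.coe_image,
    ← Set.image_comp]
  congr
  exact Set.image_congr (fun q _ => QuotientGroup.out_eq' q) |>.trans (Set.image_id _)

end Invisible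

/-- If `N` is the union (join) of all `R`-invisible subgroups of `G` (a normal subgroup), then
`G/N` has no nontrivial `R`-invisible subgroup. -/
theorem quotient_by_all_invisibles_has_no_invisible (R : Subring ℚ) {G : Type*} [Group G]
    (N : Subgroup G) [N.Normal]
    (hN : N = ⨆ (K : Subgroup G) (_ : IsRInvisible R K), K) :
    ∀ K : Subgroup (G ⧸ N), IsRInvisible R K → K = ⊥ := by
  classical
  rintro _ ⟨-, ⟨s, -, rfl⟩, hs⟩
  obtain ⟨t, ht⟩ := exists_finset_map_normalClosure_eq N s
  set M := normalClosure (t : Set G)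
  have hlift : ∀ g ∈ t, ∃ K : Subgroup G, IsRInvisible R K ∧
      ∃ e ∈ DR R, g ^ e ∈ ⁅(⊤ : Subgroup G), M⁆ ⊔ K := by
    intro g hg
    obtain ⟨e, he, hge⟩ := hs _ (ht ▸ mem_map_of_mem _ (subset_normalClosure hg))
    have hgeN : g ^ e ∈ ⁅(⊤ : Subgroup G), M⁆ ⊔ N := by
      rw [← QuotientGroup.ker_mk' N, ← comap_map_eq, map_commutator, ht,
        map_top_of_surjective _ (QuotientGroup.mk'_surjective N)]
      exact hge
    obtain ⟨c, hc, m, hm, hcm⟩ := mem_sup_of_normal_right.1 hgeN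
    obtain ⟨K, hK, hmK⟩ := exists_isRInvisible_mem_of_mem_iSup (hN ▸ hm)
    exact ⟨K, hK, e, he, hcm ▸ mul_mem_sup hc hmK⟩
  obtain ⟨K₀, hK₀, ht₀⟩ := exists_isRInvisible_forall_of_monotone t
    (fun _ _ _ hKK' ⟨e, he, hge⟩ => ⟨e, he, sup_le_sup_left hKK' _ hge⟩) hlift
  obtain ⟨-, ⟨s₀, -, rfl⟩, -⟩ := id hK₀
  have hMN : M ≤ N := by
    rw [hN]
    exact (normalClosure_mono (by simp)).trans
      (le_iSup₂ (f := fun K (_ : IsRInvisible R K) => K) _ (hK₀.normalClosure_union ht₀))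
  rwa [← ht, Subgroup.map_eq_bot_iff, QuotientGroup.ker_mk']
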